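/- Under the setup of the straggler-resilient distributed k-median algorithm, let Ĉ be an optimal set of k-median centers for the weighted summary (Y, w), and let C* be an optimal set of k-median centers for P. Then cost(P, Ĉ) ≤ 3(1+δ) · cost(P, C*). -/

import Mathlib

open Finset

noncomputable def distToSet {d : ℕ} (p : EuclideanSpace ℝ (Fin d))
    (C : Finset (EuclideanSpace ℝ (Fin d))) : ℝ :=
  sInf ((fun c => dist p c) '' (C : Set (EuclideanSpace ℝ (Fin d))))

noncomputable def cost {d : ℕ} (P C : Finset (EuclideanSpace ℝ (Fin d))) : ℝ :=
  ∑ p ∈ P, distToSet p C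

/-- Weighted cost of the combined summary `Y = ∪_j Y_j` with cluster-size weights
scaled by the recovery coefficients `b`. -/
noncomputable def summaryCost {d : ℕ} {ι : Type*}
    [DecidableEq (EuclideanSpace ℝ (Fin d))]
    (R : Finset ι) (b : ι → ℝ)
    (Pl Y : ι → Finset (EuclideanSpace ℝ (Fin d)))
    (cl : ι → EuclideanSpace ℝ (Fin d) → EuclideanSpace ℝ (Fin d))
    (C : Finset (EuclideanSpace ℝ (Fin d))) : ℝ :=
  ∑ j ∈ R, b j * ∑ y ∈ Y j,
    (((Pl j).filter (fun x => cl j x = y)).card : ℝ) * distToSet y C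

/-!
Write `A = Σ_j b_j cost(P_j, Y_j)` and `S = Σ_j b_j cost(P_j, C*)`. Since every point is
covered with total weight at least `1`, moving each `x ∈ P_j` to its centre in `Y_j` and using
the triangle inequality gives `cost(P, Ĉ) ≤ A + cost(Y, Ĉ, w)`; in the other direction
`cost(Y, C*, w) ≤ A + S`. Optimality of `Ĉ` for the summary links the two, optimality of `Y_j`
gives `A ≤ S`, and the coverage being at most `1 + δ` gives `S ≤ (1 + δ) cost(P, C*)`, so
`cost(P, Ĉ) ≤ 2A + S ≤ 3S ≤ 3(1 + δ) cost(P, C*)`.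
-/

section Coverage

variable {α ι : Type*} [DecidableEq α] (R : Finset ι) (b : ι → ℝ) (Pl : ι → Finset α)

def coverage (p : α) : ℝ :=
  ∑ j ∈ R.filter (fun j => p ∈ Pl j), b j

variable {R b Pl} {P : Finset α}

theorem sum_mul_sum_eq_sum_coverage_mul (hPl : ∀ j ∈ R, Pl j ⊆ P) (g : α → ℝ) :
    ∑ j ∈ R, b j * ∑ x ∈ Pl j, g x = ∑ p ∈ P, coverage R b Pl p * g p := by
  have restrict : ∀ j ∈ R, b j * ∑ x ∈ Pl j, g x = ∑ p ∈ P, if p ∈ Pl j then b j * g p else 0 := by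
    intro j hj
    rw [mul_sum, ← sum_filter, filter_mem_eq_inter, inter_eq_right.mpr (hPl j hj)]
  rw [sum_congr rfl restrict, sum_comm]
  refine sum_congr rfl fun p _ => ?_
  rw [coverage, sum_mul, sum_filter]

theorem sum_le_sum_mul_sum_of_one_le_coverage (hPl : ∀ j ∈ R, Pl j ⊆ P)
    (hcov : ∀ p ∈ P, 1 ≤ coverage R b Pl p) {g : α → ℝ} (hg : ∀ p ∈ P, 0 ≤ g p) :
    ∑ p ∈ P, g p ≤ ∑ j ∈ R, b j * ∑ x ∈ Pl j, g x := by
  rw [sum_mul_sum_eq_sum_coverage_mul hPl]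
  exact sum_le_sum fun p hp => le_mul_of_one_le_left (hg p hp) (hcov p hp)

theorem sum_mul_sum_le_of_coverage_le (hPl : ∀ j ∈ R, Pl j ⊆ P) {c : ℝ}
    (hcov : ∀ p ∈ P, coverage R b Pl p ≤ c) {g : α → ℝ} (hg : ∀ p ∈ P, 0 ≤ g p) :
    ∑ j ∈ R, b j * ∑ x ∈ Pl j, g x ≤ c * ∑ p ∈ P, g p := by
  rw [sum_mul_sum_eq_sum_coverage_mul hPl, mul_sum]
  exact sum_le_sum fun p hp => mul_le_mul_of_nonneg_right (hcov p hp) (hg p hp)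

end Coverage

section KMedian

variable {d : ℕ}

theorem distToSet_eq_infDist (p : EuclideanSpace ℝ (Fin d))
    (C : Finset (EuclideanSpace ℝ (Fin d))) :
    distToSet p C = Metric.infDist p (C : Set (EuclideanSpace ℝ (Fin d))) := by
  rw [distToSet, Metric.infDist_eq_iInf, sInf_image']

theorem distToSet_nonneg (p : EuclideanSpace ℝ (Fin d))
    (C : Finset (EuclideanSpace ℝ (Fin d))) : 0 ≤ distToSet p C :=
  distToSet_eq_infDist p C ▸ Metric.infDist_nonneg

theorem distToSet_le_dist_add_distToSet (x y : EuclideanSpace ℝ (Fin d))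
    (C : Finset (EuclideanSpace ℝ (Fin d))) :
    distToSet x C ≤ dist x y + distToSet y C := by
  rw [distToSet_eq_infDist, distToSet_eq_infDist, add_comm]
  exact Metric.infDist_le_infDist_add_dist

variable {Pl Y C : Finset (EuclideanSpace ℝ (Fin d))}
  {f : EuclideanSpace ℝ (Fin d) → EuclideanSpace ℝ (Fin d)}

theorem cost_le_cost_add_sum_distToSet (hf : ∀ x ∈ Pl, dist x (f x) = distToSet x Y) :
    cost Pl C ≤ cost Pl Y + ∑ x ∈ Pl, distToSet (f x) C := by
  rw [cost, cost, ← sum_add_distrib]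
  refine sum_le_sum fun x hx => ?_
  rw [← hf x hx]
  exact distToSet_le_dist_add_distToSet x (f x) C

theorem sum_distToSet_le_cost_add_cost (hf : ∀ x ∈ Pl, dist x (f x) = distToSet x Y) :
    ∑ x ∈ Pl, distToSet (f x) C ≤ cost Pl Y + cost Pl C := by
  rw [cost, cost, ← sum_add_distrib]
  refine sum_le_sum fun x hx => ?_
  rw [← hf x hx, dist_comm]
  exact distToSet_le_dist_add_distToSet (f x) x C

end KMedian

section Summary

variable {d : ℕ} {ι : Type*} [DecidableEq (EuclideanSpace ℝ (Fin d))]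
  {P : Finset (EuclideanSpace ℝ (Fin d))} {R : Finset ι} {b : ι → ℝ}
  {Pl Y : ι → Finset (EuclideanSpace ℝ (Fin d))}
  {cl : ι → EuclideanSpace ℝ (Fin d) → EuclideanSpace ℝ (Fin d)}

theorem summaryCost_eq_sum (hcl : ∀ j ∈ R, ∀ x ∈ Pl j, cl j x ∈ Y j)
    (C : Finset (EuclideanSpace ℝ (Fin d))) :
    summaryCost R b Pl Y cl C = ∑ j ∈ R, b j * ∑ x ∈ Pl j, distToSet (cl j x) C := by
  refine sum_congr rfl fun j hj => congrArg (b j * ·) ?_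
  rw [← sum_fiberwise_of_maps_to (hcl j hj)]
  refine sum_congr rfl fun y _ => ?_
  rw [sum_congr rfl fun x hx => by rw [(mem_filter.mp hx).2], sum_const, nsmul_eq_mul]

theorem cost_le_summaryCost_add (hb : ∀ j ∈ R, 0 ≤ b j)
    (hcl : ∀ j ∈ R, ∀ x ∈ Pl j, cl j x ∈ Y j ∧ dist x (cl j x) = distToSet x (Y j))
    (hPl : ∀ j ∈ R, Pl j ⊆ P)
    (hcov : ∀ p ∈ P, 1 ≤ coverage R b Pl p) (C : Finset (EuclideanSpace ℝ (Fin d))) :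
    cost P C ≤ summaryCost R b Pl Y cl C + ∑ j ∈ R, b j * cost (Pl j) (Y j) := by
  rw [summaryCost_eq_sum (fun j hj x hx => (hcl j hj x hx).1), ← sum_add_distrib]
  calc cost P C ≤ ∑ j ∈ R, b j * cost (Pl j) C :=
        sum_le_sum_mul_sum_of_one_le_coverage hPl hcov fun p _ => distToSet_nonneg p C
    _ ≤ _ := sum_le_sum fun j hj => by
        rw [← mul_add, add_comm]
        exact mul_le_mul_of_nonneg_left
          (cost_le_cost_add_sum_distToSet fun x hx => (hcl j hj x hx).2) (hb j hj)

theorem summaryCost_le_sum_add_sum (hb : ∀ j ∈ R, 0 ≤ b j)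
    (hcl : ∀ j ∈ R, ∀ x ∈ Pl j, cl j x ∈ Y j ∧ dist x (cl j x) = distToSet x (Y j))
    (C : Finset (EuclideanSpace ℝ (Fin d))) :
    summaryCost R b Pl Y cl C ≤
      ∑ j ∈ R, b j * cost (Pl j) (Y j) + ∑ j ∈ R, b j * cost (Pl j) C := by
  rw [summaryCost_eq_sum (fun j hj x hx => (hcl j hj x hx).1), ← sum_add_distrib]
  refine sum_le_sum fun j hj => ?_
  rw [← mul_add]
  exact mul_le_mul_of_nonneg_left
    (sum_distToSet_le_cost_add_cost fun x hx => (hcl j hj x hx).2) (hb j hj)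

end Summary

theorem distributed_kmedian_approx_general {d k : ℕ} {ι : Type*}
    [DecidableEq (EuclideanSpace ℝ (Fin d))]
    (P : Finset (EuclideanSpace ℝ (Fin d)))
    (R : Finset ι) (Pl : ι → Finset (EuclideanSpace ℝ (Fin d)))
    (hPl : ∀ j ∈ R, Pl j ⊆ P)
    (b : ι → ℝ) (δ : ℝ)
    (hb : ∀ j ∈ R, 0 ≤ b j)
    (hcov : ∀ p ∈ P,
      1 ≤ ∑ j ∈ R.filter (fun j => p ∈ Pl j), b j ∧
      ∑ j ∈ R.filter (fun j => p ∈ Pl j), b j ≤ 1 + δ)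
    (Y : ι → Finset (EuclideanSpace ℝ (Fin d)))
    (hYopt : ∀ j ∈ R, ∀ C' : Finset (EuclideanSpace ℝ (Fin d)),
      C'.card = k → C'.Nonempty → cost (Pl j) (Y j) ≤ cost (Pl j) C')
    (cl : ι → EuclideanSpace ℝ (Fin d) → EuclideanSpace ℝ (Fin d))
    (hcl : ∀ j ∈ R, ∀ x ∈ Pl j,
      cl j x ∈ Y j ∧ dist x (cl j x) = distToSet x (Y j))
    -- Ĉ : optimal k-median centers for the weighted summary (Y, w)
    (Chat : Finset (EuclideanSpace ℝ (Fin d)))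
    (hChatopt : ∀ C' : Finset (EuclideanSpace ℝ (Fin d)),
      C'.card = k → C'.Nonempty →
      summaryCost R b Pl Y cl Chat ≤ summaryCost R b Pl Y cl C')
    -- C* : optimal k-median centers for P
    (Cstar : Finset (EuclideanSpace ℝ (Fin d)))
    (hCstark : Cstar.card = k) (hCstarne : Cstar.Nonempty) :
    cost P Chat ≤ 3 * (1 + δ) * cost P Cstar := by
  have lower := cost_le_summaryCost_add hb hcl hPl (fun p hp => (hcov p hp).1) Chat
  have summary_opt := hChatopt Cstar hCstark hCstarne
  have upper := summaryCost_le_sum_add_sum hb hcl Cstar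
  have local_opt : ∑ j ∈ R, b j * cost (Pl j) (Y j) ≤ ∑ j ∈ R, b j * cost (Pl j) Cstar :=
    sum_le_sum fun j hj =>
      mul_le_mul_of_nonneg_left (hYopt j hj Cstar hCstark hCstarne) (hb j hj)
  have overlap : ∑ j ∈ R, b j * cost (Pl j) Cstar ≤ (1 + δ) * cost P Cstar :=
    sum_mul_sum_le_of_coverage_le hPl (fun p hp => (hcov p hp).2)
      fun p _ => distToSet_nonneg p Cstar
  linarith

/-- Theorem 3: the straggler-resilient distributed `k`-median algorithm returns a
`3(1+δ)`-approximate solution. -/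
theorem distributed_kmedian_approx {d k : ℕ} {ι : Type*} [DecidableEq ι]
    [DecidableEq (EuclideanSpace ℝ (Fin d))]
    (P : Finset (EuclideanSpace ℝ (Fin d)))
    (R : Finset ι) (Pl : ι → Finset (EuclideanSpace ℝ (Fin d)))
    (hPl : ∀ j ∈ R, Pl j ⊆ P)
    (b : ι → ℝ) (δ : ℝ) (hδ : 0 < δ)
    (hb : ∀ j ∈ R, 0 ≤ b j)
    (hcov : ∀ p ∈ P,
      1 ≤ ∑ j ∈ R.filter (fun j => p ∈ Pl j), b j ∧
      ∑ j ∈ R.filter (fun j => p ∈ Pl j), b j ≤ 1 + δ)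
    (Y : ι → Finset (EuclideanSpace ℝ (Fin d)))
    (hYk : ∀ j ∈ R, (Y j).card = k ∧ (Y j).Nonempty)
    (hYopt : ∀ j ∈ R, ∀ C' : Finset (EuclideanSpace ℝ (Fin d)),
      C'.card = k → C'.Nonempty → cost (Pl j) (Y j) ≤ cost (Pl j) C')
    (cl : ι → EuclideanSpace ℝ (Fin d) → EuclideanSpace ℝ (Fin d))
    (hcl : ∀ j ∈ R, ∀ x ∈ Pl j,
      cl j x ∈ Y j ∧ dist x (cl j x) = distToSet x (Y j))
    -- Ĉ : optimal k-median centers for the weighted summary (Y, w)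
    (Chat : Finset (EuclideanSpace ℝ (Fin d)))
    (hChatk : Chat.card = k) (hChatne : Chat.Nonempty)
    (hChatopt : ∀ C' : Finset (EuclideanSpace ℝ (Fin d)),
      C'.card = k → C'.Nonempty →
      summaryCost R b Pl Y cl Chat ≤ summaryCost R b Pl Y cl C')
    -- C* : optimal k-median centers for P
    (Cstar : Finset (EuclideanSpace ℝ (Fin d)))
    (hCstark : Cstar.card = k) (hCstarne : Cstar.Nonempty)
    (hCstaropt : ∀ C' : Finset (EuclideanSpace ℝ (Fin d)),
      C'.card = k → C'.Nonempty → cost P Cstar ≤ cost P C') :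
    cost P Chat ≤ 3 * (1 + δ) * cost P Cstar :=
  distributed_kmedian_approx_general P R Pl hPl b δ hb hcov Y hYopt cl hcl Chat hChatopt Cstar
    hCstark hCstarne
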